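/- arXiv:2010.03013 — 9 statements merged into one kernel-verified Lean document; each statement's English description precedes it below -/
import Mathlib

section
/- Let R be a commutative ring. Every Gorenstein projective R-module M admits a special free preenvelope: there exists an injective R-homomorphism λ : M → F with F free, such that for every free R-module E the induced map Hom_R(F, E) → Hom_R(M, E) is surjective, and coker(λ) is Gorenstein projective. -/
universe u

/-- `Q` is a Gorenstein projective `R`-module: there is an exact `ℤ`-indexed complex of
projective `R`-modules which stays exact after applying `Hom_R(-, E)` for every projective
`E`, such that `Q` is isomorphic to one of the images of its differentials. -/
def IsGorensteinProjective (R : Type u) [CommRing R]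
    (Q : Type u) [AddCommGroup Q] [Module R Q] : Prop :=
  ∃ (P : ℤ → ModuleCat.{u} R) (d : ∀ i : ℤ, P (i + 1) →ₗ[R] P i),
    (∀ i, Module.Projective R (P i)) ∧
    (∀ i, LinearMap.range (d (i + 1)) = LinearMap.ker (d i)) ∧
    (∀ E : ModuleCat.{u} R, Module.Projective R E →
      ∀ (i : ℤ) (φ : P (i + 1) →ₗ[R] E), φ.comp (d (i + 1)) = 0 →
        ∃ ψ : P i →ₗ[R] E, φ = ψ.comp (d i)) ∧
    ∃ i : ℤ, Nonempty (Q ≃ₗ[R] LinearMap.range (d i))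

variable {R : Type u} [CommRing R]

theorem IsGorensteinProjective.of_equiv {A B : Type u} [AddCommGroup A] [Module R A]
    [AddCommGroup B] [Module R B] (hA : IsGorensteinProjective R A) (e : A ≃ₗ[R] B) :
    IsGorensteinProjective R B := by
  obtain ⟨P, d, h1, h2, h3, i, ⟨f⟩⟩ := hA
  exact ⟨P, d, h1, h2, h3, i, ⟨e.symm.trans f⟩⟩

theorem range_prodMap' {M N M' N' : Type u} [AddCommGroup M] [Module R M] [AddCommGroup N]
    [Module R N] [AddCommGroup M'] [Module R M'] [AddCommGroup N'] [Module R N']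
    (f : M →ₗ[R] M') (g : N →ₗ[R] N') :
    LinearMap.range (f.prodMap g) = (LinearMap.range f).prod (LinearMap.range g) := by
  ext ⟨a, b⟩
  simp only [LinearMap.mem_range, Submodule.mem_prod, LinearMap.prodMap_apply, Prod.ext_iff,
    Prod.exists]
  constructor
  · rintro ⟨x, y, hx, hy⟩; exact ⟨⟨x, hx⟩, ⟨y, hy⟩⟩
  · rintro ⟨⟨x, hx⟩, ⟨y, hy⟩⟩; exact ⟨x, y, hx, hy⟩

/-- `p.prod q` is equivalent to `p × q`. -/
def prodSubEquiv {M N : Type u} [AddCommGroup M] [Module R M] [AddCommGroup N] [Module R N]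
    (p : Submodule R M) (q : Submodule R N) :
    (p.prod q : Submodule R (M × N)) ≃ₗ[R] p × q where
  toFun x := (⟨x.1.1, x.2.1⟩, ⟨x.1.2, x.2.2⟩)
  invFun x := ⟨(x.1.1, x.2.1), ⟨x.1.2, x.2.2⟩⟩
  map_add' _ _ := rfl
  map_smul' _ _ := rfl
  left_inv _ := rfl
  right_inv _ := rfl

theorem IsGorensteinProjective.prod_projective {A K : Type u} [AddCommGroup A] [Module R A]
    [AddCommGroup K] [Module R K] (hA : IsGorensteinProjective R A)
    (hK : Module.Projective R K) : IsGorensteinProjective R (A × K) := by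
  obtain ⟨P, d, h1, h2, h3, i, ⟨f⟩⟩ := hA
  haveI := hK
  set dK : (K × K) →ₗ[R] K × K := (LinearMap.snd R K K).prod 0 with hdK
  have hdKapp : ∀ x : K × K, dK x = (x.2, 0) := fun _ => rfl
  have hker : LinearMap.ker dK = (⊤ : Submodule R K).prod ⊥ := by
    ext x
    simp [hdKapp, LinearMap.mem_ker, Prod.ext_iff]
  have hrange : LinearMap.range dK = (⊤ : Submodule R K).prod ⊥ := by
    ext x
    simp only [LinearMap.mem_range, Submodule.mem_prod, Submodule.mem_top, Submodule.mem_bot,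
      true_and, hdKapp, Prod.ext_iff]
    constructor
    · rintro ⟨y, hy1, hy2⟩; exact hy2 ▸ rfl
    · intro h; exact ⟨(0, x.1), rfl, h.symm⟩
  -- K ≃ range dK
  have hmem : ∀ b : K, ((b, 0) : K × K) ∈ LinearMap.range dK := by
    intro b; rw [hrange]; exact ⟨trivial, rfl⟩
  have hsnd : ∀ x : LinearMap.range dK, ((x : K × K)).2 = 0 := by
    rintro ⟨x, y, rfl⟩; rfl
  let eK : K ≃ₗ[R] LinearMap.range dK := LinearEquiv.ofBijective
    (LinearMap.codRestrict _ ((LinearMap.id : K →ₗ[R] K).prod 0) (fun b => hmem b))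
    ⟨fun a b h => by exact congrArg (fun z : LinearMap.range dK => (z : K × K).1) h,
     fun x => ⟨(x : K × K).1, Subtype.ext (Prod.ext rfl (hsnd x).symm)⟩⟩
  refine ⟨fun k => ModuleCat.of R (P k × (K × K)), fun k => (d k).prodMap dK, ?_, ?_, ?_, i, ⟨?_⟩⟩
  · intro k
    haveI := h1 k
    exact inferInstanceAs (Module.Projective R (P k × (K × K)))
  · intro k
    rw [range_prodMap', LinearMap.ker_prodMap, h2, hrange, hker]
  · intro E hE k φ h0
    obtain ⟨ψ₁, hψ₁⟩ := h3 E hE k (φ ∘ₗ LinearMap.inl R (P (k + 1)) (K × K)) (by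
      ext x
      simpa using LinearMap.congr_fun h0 (x, 0))
    have hφ₂0 : ∀ b : K, φ (0, (b, 0)) = 0 := by
      intro b
      have h00 : ((d (k + 1)).prodMap dK) (0, (0, b)) = ((0 : P (k + 1)), ((b : K), (0 : K))) := by
        rw [LinearMap.prodMap_apply, map_zero]; rfl
      have hq0 : φ (((d (k + 1)).prodMap dK) (0, (0, b))) = 0 :=
        LinearMap.congr_fun h0 (0, (0, b))
      rw [h00] at hq0
      exact hq0
    refine ⟨ψ₁.coprod ((φ ∘ₗ LinearMap.inr R (P (k + 1)) (K × K)) ∘ₗ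
      (LinearMap.inr R K K) ∘ₗ (LinearMap.fst R K K)), ?_⟩
    apply LinearMap.ext
    rintro ⟨p, q⟩
    have hpq : ((p, 0) : _ × (K × K)) + (0, q) = (p, q) := by simp
    have hsplit : φ (p, q) = φ (p, 0) + φ (0, q) := by rw [← hpq, map_add]
    have hq : φ (0, q) = φ (0, (0, q.2)) := by
      have h' : (((0 : P (k+1)), ((q.1, 0) : K × K)) : _) + (0, (0, q.2)) = (0, q) := by simp
      rw [← h', map_add, hφ₂0 q.1, zero_add]
    show φ (p, q) = ψ₁ (d k p) + φ (0, (0, (dK q).1))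
    rw [hsplit, hq, hdKapp]
    congr 1
    exact LinearMap.congr_fun hψ₁ p
  · -- A × K ≃ range ((d i).prodMap dK)
    exact (f.prodCongr eK).trans
      ((prodSubEquiv _ _).symm.trans (LinearEquiv.ofEq _ _ (range_prodMap' (d i) dK).symm))

/-- Quotient of a product by a product of submodules. -/
noncomputable def quotProdEquiv {M N : Type u} [AddCommGroup M] [Module R M] [AddCommGroup N]
    [Module R N] (p : Submodule R M) (q : Submodule R N) :
    ((M × N) ⧸ p.prod q) ≃ₗ[R] (M ⧸ p) × (N ⧸ q) :=
  (Submodule.quotEquivOfEq _ _ (by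
      rw [LinearMap.ker_prodMap, Submodule.ker_mkQ, Submodule.ker_mkQ])).trans
    (LinearMap.quotKerEquivOfSurjective (p.mkQ.prodMap q.mkQ) (by
      rintro ⟨a, b⟩
      obtain ⟨x, rfl⟩ := Submodule.Quotient.mk_surjective p a
      obtain ⟨y, rfl⟩ := Submodule.Quotient.mk_surjective q b
      exact ⟨(x, y), rfl⟩))

section Abstract

variable {N F M : Type u} [AddCommGroup N] [Module R N] [AddCommGroup F] [Module R F]
  [AddCommGroup M] [Module R M]

theorem ker_projective_of_split [Module.Projective R F] (π : F →ₗ[R] N) (s : N →ₗ[R] F)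
    (hs : Function.LeftInverse π s) : Module.Projective R (LinearMap.ker π) := by
  have hrK : ∀ x : F, x - s (π x) ∈ LinearMap.ker π := by
    intro x
    have : π (x - s (π x)) = 0 := by rw [map_sub, hs (π x), sub_self]
    exact this
  apply Module.Projective.of_split (LinearMap.ker π).subtype
    (LinearMap.codRestrict _ (LinearMap.id - s ∘ₗ π) hrK)
  apply LinearMap.ext
  intro x
  apply Subtype.ext
  show (x : F) - s (π (x : F)) = (x : F)
  rw [x.2, map_zero, sub_zero]

/-- Cokernel of the composite `M ≃ p ↪ N → F` (via a section `s` of `π`) is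
`(N ⧸ p) × ker π`. -/
noncomputable def cokerSplitEquiv (π : F →ₗ[R] N) (s : N →ₗ[R] F)
    (hs : Function.LeftInverse π s) (p : Submodule R N) (e : M ≃ₗ[R] p) :
    (F ⧸ LinearMap.range (s ∘ₗ p.subtype ∘ₗ (e : M →ₗ[R] p))) ≃ₗ[R]
      (N ⧸ p) × LinearMap.ker π := by
  have hrK : ∀ x : F, x - s (π x) ∈ LinearMap.ker π := by
    intro x
    have : π (x - s (π x)) = 0 := by rw [map_sub, hs (π x), sub_self]
    exact this
  let r : F →ₗ[R] LinearMap.ker π := LinearMap.codRestrict _ (LinearMap.id - s ∘ₗ π) hrK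
  let g : F ≃ₗ[R] N × LinearMap.ker π :=
    LinearEquiv.ofLinear (π.prod r) (s.coprod (LinearMap.ker π).subtype)
      (by
        apply LinearMap.ext
        rintro ⟨n, k⟩
        have hπk : π (k : F) = 0 := k.2
        refine Prod.ext ?_ (Subtype.ext ?_)
        · show π (s n + (k : F)) = n
          rw [map_add, hs n, hπk, add_zero]
        · show (s n + (k : F)) - s (π (s n + (k : F))) = (k : F)
          rw [map_add, hs n, hπk, add_zero, add_sub_cancel_left])
      (by
        apply LinearMap.ext
        intro x
        show s (π x) + (x - s (π x)) = x
        abel)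
  have hgs : ∀ n : N, (g : F →ₗ[R] N × LinearMap.ker π) (s n) = (n, 0) := by
    intro n
    refine Prod.ext ?_ (Subtype.ext ?_)
    · show π (s n) = n
      exact hs n
    · show s n - s (π (s n)) = 0
      rw [hs n, sub_self]
  have hmap : (LinearMap.range (s ∘ₗ p.subtype ∘ₗ (e : M →ₗ[R] p))).map
      (g : F →ₗ[R] N × LinearMap.ker π) = p.prod (⊥ : Submodule R (LinearMap.ker π)) := by
    ext z
    simp only [Submodule.mem_map, LinearMap.mem_range, Submodule.mem_prod, Submodule.mem_bot]
    constructor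
    · rintro ⟨y, ⟨m, rfl⟩, rfl⟩
      rw [show ((s ∘ₗ p.subtype ∘ₗ (e : M →ₗ[R] p)) m) = s ((e m : N)) from rfl, hgs]
      exact ⟨(e m).2, rfl⟩
    · rintro ⟨hz1, hz2⟩
      refine ⟨s z.1, ⟨e.symm ⟨z.1, hz1⟩, ?_⟩, ?_⟩
      · show s (((e (e.symm ⟨z.1, hz1⟩)) : N)) = s z.1
        rw [LinearEquiv.apply_symm_apply]
      · rw [hgs]
        exact Prod.ext rfl hz2.symm
  exact (Submodule.Quotient.equiv _ _ g hmap).trans <|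
    (quotProdEquiv _ _).trans <|
      LinearEquiv.prodCongr (LinearEquiv.refl R (N ⧸ p))
        ((⊥ : Submodule R (LinearMap.ker π)).quotEquivOfEqBot rfl)

end Abstract


/-- Every Gorenstein projective module admits a special free preenvelope: an injective map
`λ : M → F` into a free module such that `Hom(F, E) → Hom(M, E)` is surjective for every
free `E`, and `coker λ` is Gorenstein projective. -/
theorem gorensteinProjective_special_free_preenvelope
    {R : Type u} [CommRing R] (M : Type u) [AddCommGroup M] [Module R M]
    (hM : IsGorensteinProjective R M) :
    ∃ F : ModuleCat.{u} R, Module.Free R F ∧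
      ∃ lam : M →ₗ[R] F,
        Function.Injective lam ∧
        (∀ E : ModuleCat.{u} R, Module.Free R E →
          Function.Surjective fun φ : F →ₗ[R] E => φ.comp lam) ∧
        IsGorensteinProjective R ((F : Type u) ⧸ LinearMap.range lam) := by
  classical
  obtain ⟨P, d, h1, h2, h3, i, ⟨e⟩⟩ := hM
  obtain ⟨j, rfl⟩ : ∃ j, i = j + 1 := ⟨i - 1, by omega⟩
  obtain ⟨s, hs⟩ := Module.projective_def.mp (h1 (j + 1))
  refine ⟨ModuleCat.of R ((P (j + 1) : Type u) →₀ R),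
    inferInstanceAs (Module.Free R ((P (j + 1) : Type u) →₀ R)),
    s ∘ₗ (LinearMap.range (d (j + 1))).subtype ∘ₗ (e : M →ₗ[R] _), ?_, ?_, ?_⟩
  · -- injectivity
    intro a b hab
    exact e.injective (Subtype.coe_injective (hs.injective hab))
  · -- preenvelope property
    intro E hE φ
    haveI : Module.Free R E := hE
    have hρ : (φ ∘ₗ (e.symm : LinearMap.range (d (j + 1)) →ₗ[R] M) ∘ₗ
        (d (j + 1)).rangeRestrict).comp (d (j + 1 + 1)) = 0 := by
      ext x
      have hx : d (j + 1) (d (j + 1 + 1) x) = 0 := by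
        have hmem : d (j + 1 + 1) x ∈ LinearMap.ker (d (j + 1)) :=
          (h2 (j + 1)) ▸ LinearMap.mem_range_self _ x
        exact hmem
      have hz : (d (j + 1)).rangeRestrict (d (j + 1 + 1) x) = 0 := Subtype.ext hx
      simp only [LinearMap.comp_apply, hz, map_zero, LinearMap.zero_apply]
    obtain ⟨ψ, hψ⟩ := h3 E inferInstance (j + 1)
      (φ ∘ₗ (e.symm : LinearMap.range (d (j + 1)) →ₗ[R] M) ∘ₗ (d (j + 1)).rangeRestrict) hρ
    refine ⟨ψ ∘ₗ Finsupp.linearCombination R id, ?_⟩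
    apply LinearMap.ext
    intro m
    obtain ⟨x, hx⟩ := (e m).2
    have step : ψ ((e m : (P (j + 1) : Type u))) = φ m := by
      rw [← hx]
      have hcf := LinearMap.congr_fun hψ x
      simp only [LinearMap.comp_apply] at hcf
      rw [← hcf]
      have hrr : (d (j + 1)).rangeRestrict x = e m := Subtype.ext hx
      simp only [hrr, LinearEquiv.coe_coe, LinearEquiv.symm_apply_apply]
    show ψ (Finsupp.linearCombination R id (s ((e m : (P (j + 1) : Type u))))) = φ m
    rw [hs _, step]
  · -- cokernel is Gorenstein projective
    haveI : Module.Projective R ((P (j + 1) : Type u) →₀ R) :=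
      inferInstanceAs (Module.Projective R ((P (j + 1) : Type u) →₀ R))
    have hKproj : Module.Projective R
        (LinearMap.ker (Finsupp.linearCombination R (id : (P (j + 1) : Type u) → _))) :=
      ker_projective_of_split _ s hs
    have hGP : IsGorensteinProjective R
        ((LinearMap.range (d j) : Submodule R (P j)) ×
          LinearMap.ker (Finsupp.linearCombination R (id : (P (j + 1) : Type u) → _))) :=
      IsGorensteinProjective.prod_projective
        ⟨P, d, h1, h2, h3, j, ⟨LinearEquiv.refl R _⟩⟩ hKproj
    refine hGP.of_equiv (LinearEquiv.symm ?_)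
    exact (cokerSplitEquiv _ s hs (LinearMap.range (d (j + 1))) e).trans
      (LinearEquiv.prodCongr
        ((Submodule.quotEquivOfEq _ _ (h2 j)).trans (d j).quotKerEquivRange)
        (LinearEquiv.refl R _))
end

section
/- Let R be a commutative Noetherian ring, a an element of R, and M a finitely generated R-module. The inverse system {(0 :_M a^k)}_{k∈ℕ} with transition maps (0 :_M a^k) → (0 :_M a^l) given by multiplication by a^{k-l} (for k ≥ l) satisfies the trivial Mittag-Leffler condition: for every l there exists k ≥ l such that the transition map (0 :_M a^k) → (0 :_M a^l) is zero. -/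
/-- For a Noetherian ring `R`, `a ∈ R` and a finitely generated module `M`, the inverse
system `{(0 :_M a^k)}` with transition maps given by multiplication by powers of `a`
satisfies the trivial Mittag-Leffler condition: for every `l` there is `k ≥ l` such that
the transition map `(0 :_M a^k) → (0 :_M a^l)`, `x ↦ a^(k-l) • x`, is zero. -/
theorem annihilator_tower_trivial_mittagLeffler
    {R : Type*} [CommRing R] [IsNoetherianRing R]
    {M : Type*} [AddCommGroup M] [Module R M] [Module.Finite R M] (a : R) :
    ∀ l : ℕ, ∃ k, l ≤ k ∧ ∀ x : M, a ^ k • x = 0 → a ^ (k - l) • x = 0 := by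
  have hN : IsNoetherian R M := isNoetherian_of_isNoetherianRing_of_finite R M
  have hmono : Monotone (fun k : ℕ => Submodule.torsionBy R M (a ^ k)) := by
    intro i j hij x hx
    rw [Submodule.mem_torsionBy_iff] at hx ⊢
    rw [← Nat.sub_add_cancel hij, pow_add, mul_smul, hx, smul_zero]
  obtain ⟨n, hn⟩ := monotone_stabilizes_iff_noetherian.mpr hN ⟨_, hmono⟩
  intro l
  refine ⟨n + l, le_add_self, fun x hx => ?_⟩
  have : x ∈ Submodule.torsionBy R M (a ^ n) := by
    rw [show Submodule.torsionBy R M (a ^ n) = Submodule.torsionBy R M (a ^ (n + l)) from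
      hn (n + l) (Nat.le_add_right n l)]
    exact hx
  simpa [Nat.add_sub_cancel] using this
end

section
/- Let R be a commutative ring and {M_α, φ_{αβ}}_{α∈ℕ} an inverse system of R-modules satisfying the trivial Mittag-Leffler condition. Then the map ϖ : ∏_{α∈ℕ} M_α → ∏_{α∈ℕ} M_α defined by ϖ((x_α)) = (x_α − φ_{α+1,α}(x_{α+1})) is an isomorphism; in particular lim M_α = 0 and lim^1 M_α = 0. -/
/-!
Write `ϖ = 1 - S`, where `S` is the shift `(x_α) ↦ (φ_{α+1,α} x_{α+1})`. The power `S^k` sends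
`x` to `(φ_{α+k,α} x_{α+k})_α`, so the trivial Mittag-Leffler condition says that in each coordinate
some power of `S` vanishes. A fixed point of `S` is then zero, and the geometric series `∑ S^k y`,
which is a finite sum in each coordinate, is a preimage of `y`.
-/

open Finset

section PiEnd

variable {R : Type*} [Semiring R] {ι : Type*} {M : ι → Type*}
  [∀ i, AddCommGroup (M i)] [∀ i, Module R (M i)]

lemma Module.End.pow_apply_eq_zero_of_le {S : Module.End R (∀ i, M i)} {i : ι} {K k : ℕ}
    (hK : ∀ x, (S ^ K) x i = 0) (hk : K ≤ k) (x : ∀ i, M i) : (S ^ k) x i = 0 := by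
  obtain ⟨j, rfl⟩ := Nat.exists_eq_add_of_le hk
  rw [pow_add, Module.End.mul_apply, hK]

theorem Module.End.injective_one_sub_of_pow_apply_eq_zero {S : Module.End R (∀ i, M i)}
    (hS : ∀ i, ∃ K, ∀ x, (S ^ K) x i = 0) : Function.Injective ⇑(1 - S) := by
  rw [injective_iff_map_eq_zero]
  intro x hx
  have hfix : S x = x := (sub_eq_zero.mp hx).symm
  have hpow : ∀ k, (S ^ k) x = x := fun k => by
    induction k with
    | zero => rfl
    | succ k ih => rw [pow_succ, Module.End.mul_apply, hfix, ih]
  funext i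
  obtain ⟨K, hK⟩ := hS i
  rw [← hpow K, hK, Pi.zero_apply]

end PiEnd

section TowerShift

variable {R : Type*} [Semiring R] {M : ℕ → Type*} [∀ n, AddCommGroup (M n)] [∀ n, Module R (M n)]

def towerShift (f : ∀ n, M (n + 1) →ₗ[R] M n) : Module.End R (∀ n, M n) :=
  LinearMap.pi fun n => (f n).comp (LinearMap.proj (n + 1))

@[simp]
lemma towerShift_apply (f : ∀ n, M (n + 1) →ₗ[R] M n) (x : ∀ n, M n) (n : ℕ) :
    towerShift f x n = f n (x (n + 1)) :=
  rfl

lemma sum_pow_towerShift_apply_eq_of_le {f : ∀ n, M (n + 1) →ₗ[R] M n} {n K N : ℕ}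
    (hK : ∀ x, (towerShift f ^ K) x n = 0) (hN : K ≤ N) (y : ∀ n, M n) :
    (∑ k ∈ range N, (towerShift f ^ k) y) n = (∑ k ∈ range K, (towerShift f ^ k) y) n := by
  rw [Finset.sum_apply, Finset.sum_apply]
  refine (Finset.sum_subset (range_subset_range.mpr hN) fun k _ hk => ?_).symm
  exact Module.End.pow_apply_eq_zero_of_le hK (not_lt.mp (mem_range.not.mp hk)) y

theorem surjective_one_sub_towerShift {f : ∀ n, M (n + 1) →ₗ[R] M n}
    (hS : ∀ n, ∃ K, ∀ x, (towerShift f ^ K) x n = 0) : Function.Surjective ⇑(1 - towerShift f) := by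
  choose K hK using hS
  intro y
  let G : ℕ → ∀ n, M n := fun N => ∑ k ∈ range N, (towerShift f ^ k) y
  refine ⟨fun n => G (K n) n, funext fun n => ?_⟩
  let N := max (K n) (K (n + 1))
  have htelescope : (1 - towerShift f) (G N) = y - (towerShift f ^ N) y := by
    simpa only [Module.End.mul_apply, LinearMap.sum_apply, LinearMap.sub_apply,
      Module.End.one_apply] using LinearMap.congr_fun (mul_neg_geom_sum (towerShift f) N) y
  have hGn : G N n = G (K n) n := sum_pow_towerShift_apply_eq_of_le (hK n) (le_max_left _ _) y
  have hGsucc : G N (n + 1) = G (K (n + 1)) (n + 1) :=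
    sum_pow_towerShift_apply_eq_of_le (hK (n + 1)) (le_max_right _ _) y
  calc G (K n) n - f n (G (K (n + 1)) (n + 1))
    _ = ((1 - towerShift f) (G N)) n := by rw [← hGn, ← hGsucc]; rfl
    _ = y n := by
      rw [htelescope, Pi.sub_apply, Module.End.pow_apply_eq_zero_of_le (hK n) (le_max_left _ _),
        sub_zero]

end TowerShift

section InverseSystem

variable {R : Type*} [Semiring R] {M : ℕ → Type*} [∀ n, AddCommGroup (M n)] [∀ n, Module R (M n)]

lemma towerShift_pow_apply (φ : ∀ α β, β ≤ α → (M α →ₗ[R] M β))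
    (hid : ∀ α, φ α α le_rfl = LinearMap.id)
    (hcomp : ∀ α β γ (h1 : γ ≤ β) (h2 : β ≤ α),
      (φ β γ h1).comp (φ α β h2) = φ α γ (h1.trans h2))
    (k : ℕ) (x : ∀ n, M n) (β : ℕ) :
    (towerShift (fun n => φ (n + 1) n (Nat.le_succ n)) ^ k) x β
      = φ (β + k) β (Nat.le_add_right β k) (x (β + k)) := by
  induction k generalizing x with
  | zero => exact (LinearMap.congr_fun (hid β) (x β)).symm
  | succ k ih =>
    rw [pow_succ, Module.End.mul_apply, ih, towerShift_apply, ← LinearMap.comp_apply,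
      hcomp _ _ _ _ (Nat.le_succ _)]
    rfl

end InverseSystem

/-- If an inverse system `{M_α, φ_{αβ}}` over `ℕ` satisfies the trivial Mittag-Leffler
condition, then the map `ϖ : ∏ M_α → ∏ M_α`, `(x_α) ↦ (x_α - φ_{α+1,α}(x_{α+1}))`, is an
isomorphism; in particular `lim M_α = ker ϖ = 0` and `lim¹ M_α = coker ϖ = 0`. -/
theorem inverse_system_trivial_ML_pi_map_bijective
    {R : Type*} [CommRing R] (M : ℕ → Type*)
    [∀ α, AddCommGroup (M α)] [∀ α, Module R (M α)]
    (φ : ∀ α β, β ≤ α → (M α →ₗ[R] M β))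
    (hid : ∀ α, φ α α le_rfl = LinearMap.id)
    (hcomp : ∀ α β γ (h1 : γ ≤ β) (h2 : β ≤ α),
      (φ β γ h1).comp (φ α β h2) = φ α γ (h1.trans h2))
    (hML : ∀ β, ∃ α, ∃ h : β ≤ α, φ α β h = 0) :
    Function.Bijective (LinearMap.pi fun α =>
      (LinearMap.proj α : ((a : ℕ) → M a) →ₗ[R] M α)
        - (φ (α + 1) α (Nat.le_succ α)).comp (LinearMap.proj (α + 1))) := by
  have hnil : ∀ β, ∃ K, ∀ x,
      (towerShift (fun n => φ (n + 1) n (Nat.le_succ n)) ^ K) x β = 0 := fun β => by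
    obtain ⟨α, hβα, hzero⟩ := hML β
    refine ⟨α, fun x => ?_⟩
    rw [towerShift_pow_apply φ hid hcomp, ← hcomp _ _ _ hβα (Nat.le_add_left α β), hzero,
      LinearMap.zero_comp, LinearMap.zero_apply]
  -- the map in the statement is `1 - towerShift _` by definition
  exact ⟨Module.End.injective_one_sub_of_pow_apply_eq_zero hnil,
    surjective_one_sub_towerShift hnil⟩
end

section
/- Let R be a commutative Noetherian ring, M an R-module, and N a finitely generated R-module. Then Hom_R(N, M) = 0 if and only if (0 :_M ann_R(N)) = 0. -/
/-!
A nonzero `x ∈ M` killed by `ann_R N` spans a finitely generated submodule `Rx ⊆ M`, and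
`Hom_R(N, M) = 0` forces `Hom_R(N, Rx) = 0`. For finitely generated modules over a Noetherian
ring this yields an `Rx`-regular element of `ann_R N`, which is impossible since `ann_R N` kills
the nonzero element `x` of `Rx`. Conversely the image of any `f : N → M` is killed by `ann_R N`.
-/

open Module

section

variable {R : Type*} [CommRing R] {M N : Type*} [AddCommGroup M] [Module R M]
  [AddCommGroup N] [Module R N]

lemma LinearMap.annihilator_smul_apply (f : N →ₗ[R] M) {a : R} (ha : a ∈ annihilator R N)
    (n : N) : a • f n = 0 := by
  rw [← map_smul, mem_annihilator.mp ha n, map_zero]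

lemma Submodule.subsingleton_linearMap_of_subsingleton (S : Submodule R M)
    [Subsingleton (N →ₗ[R] M)] : Subsingleton (N →ₗ[R] S) :=
  ⟨fun _ _ => (LinearMap.cancel_left S.injective_subtype).mp (Subsingleton.elim _ _)⟩

theorem subsingleton_linearMap_iff_forall_annihilator_smul_eq_zero [IsNoetherianRing R]
    [Module.Finite R N] :
    Subsingleton (N →ₗ[R] M) ↔ ∀ x : M, (∀ a ∈ annihilator R N, a • x = 0) → x = 0 := by
  refine ⟨fun _ x hx => ?_, fun h => ⟨fun f g => ?_⟩⟩
  · have := (R ∙ x).subsingleton_linearMap_of_subsingleton (N := N)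
    obtain ⟨r, hr, hreg⟩ := IsSMulRegular.subsingleton_linearMap_iff.mp this
    have hx' : r • (⟨x, Submodule.mem_span_singleton_self x⟩ : R ∙ x) = 0 :=
      Subtype.ext (hx r hr)
    simpa using congrArg Subtype.val (hreg.right_eq_zero_of_smul hx')
  · ext n
    rw [h (f n) (fun a ha => f.annihilator_smul_apply ha n),
      h (g n) (fun a ha => g.annihilator_smul_apply ha n)]

end

/-- For a Noetherian ring `R`, an `R`-module `M` and a finitely generated `R`-module `N`:
`Hom_R(N, M) = 0` if and only if `(0 :_M ann_R N) = 0`. -/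
theorem hom_eq_zero_iff_annihilator_torsion_eq_zero
    {R : Type*} [CommRing R] [IsNoetherianRing R]
    (M : Type*) [AddCommGroup M] [Module R M]
    (N : Type*) [AddCommGroup N] [Module R N] [Module.Finite R N] :
    (∀ f : N →ₗ[R] M, f = 0) ↔
      ∀ x : M, (∀ a ∈ (⊤ : Submodule R N).annihilator, a • x = 0) → x = 0 := by
  rw [Submodule.annihilator_top, ← subsingleton_linearMap_iff_forall_annihilator_smul_eq_zero,
    subsingleton_iff_forall_eq 0]
end

section
/- Let R be a commutative Noetherian ring, M an R-module, and N a finitely generated R-module. Then M ⊗_R N = 0 if and only if M = ann_R(N)·M. Consequently, Supp_R(M ⊗_R N) = Supp_R(M / ann_R(N)·M). -/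
/-!
Let `I = ann N` and suppose `M ≠ I M`. The character module of `M / I M` is a nonzero module
killed by `I`, so over a Noetherian ring it has an associated prime `p ⊇ I`, i.e. `R / p` embeds
into it. As `p` lies in the support of `N`, the vector space `κ(p) ⊗ N` is nonzero; a nonzero
functional on it, with denominators cleared in `κ(p) = Frac(R / p)`, is a nonzero map `N → R / p`.
The composite `N → (M / I M)^∨` is a nonzero character of `N ⊗ M / I M`, a quotient of `N ⊗ M`.
The support statement follows by applying this to the localizations `M_p`, since
`M ⊗ R / I ≅ M / I M` and `R / I` has annihilator `I`.
-/

universe u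

open TensorProduct

theorem nontrivial_linearMap_of_isFractionRing {R A K N : Type*} [CommRing R] [CommRing A]
    [CommRing K] [Algebra R A] [Algebra A K] [Algebra R K] [IsScalarTower R A K]
    [IsFractionRing A K] [AddCommGroup N] [Module R N] [Module.Finite R N]
    [Nontrivial (N →ₗ[R] K)] : Nontrivial (N →ₗ[R] A) := by
  classical
  obtain ⟨φ, hφ⟩ := exists_ne (0 : N →ₗ[R] K)
  obtain ⟨s, hs⟩ := Module.Finite.fg_top (R := R) (M := N)
  obtain ⟨b, hb⟩ := IsLocalization.exist_integer_multiples_of_finset (nonZeroDivisors A) (s.image φ)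
  let ι := (Algebra.linearMap A K).restrictScalars R
  have hι : Function.Injective ι := IsFractionRing.injective A K
  have hrange : LinearMap.range ((b : A) • φ) ≤ LinearMap.range ι := by
    rw [LinearMap.range_eq_map, ← hs, Submodule.map_span_le]
    exact fun g hg ↦ hb _ (Finset.mem_image_of_mem φ hg)
  let ψ := (LinearEquiv.ofInjective ι hι).symm.toLinearMap ∘ₗ Submodule.inclusion hrange ∘ₗ
    ((b : A) • φ).rangeRestrict
  have hψ : ι ∘ₗ ψ = (b : A) • φ := by
    ext n
    simp [ψ]
  refine ⟨ψ, 0, fun h ↦ hφ ?_⟩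
  ext n
  have hn := congr($hψ n)
  simp only [h, LinearMap.comp_zero, LinearMap.zero_apply, LinearMap.smul_apply,
    Algebra.smul_def] at hn
  exact (IsLocalization.map_units K b).mul_right_eq_zero.mp hn.symm

section

variable {R N : Type*} [CommRing R] [AddCommGroup N] [Module R N]

theorem nontrivial_linearMap_of_nontrivial_tensorProduct {K : Type*} [Field K] [Algebra R K]
    [Nontrivial (K ⊗[R] N)] : Nontrivial (N →ₗ[R] K) :=
  (LinearMap.liftBaseChangeEquiv K).toEquiv.nontrivial

theorem nontrivial_linearMap_quotient_of_annihilator_le [Module.Finite R N] (p : Ideal R)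
    [p.IsPrime] (hp : Module.annihilator R N ≤ p) : Nontrivial (N →ₗ[R] R ⧸ p) := by
  have : Nontrivial (p.ResidueField ⊗[R] N) :=
    (Module.mem_support_iff_nontrivial_residueField_tensorProduct ⟨p, ‹_›⟩).mp
      (Module.mem_support_iff_of_finite.mpr hp)
  have : Nontrivial (N →ₗ[R] p.ResidueField) := nontrivial_linearMap_of_nontrivial_tensorProduct
  exact nontrivial_linearMap_of_isFractionRing (K := p.ResidueField)

theorem CharacterModule.nontrivial_iff (A : Type*) [AddCommGroup A] :
    Nontrivial (CharacterModule A) ↔ Nontrivial A := by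
  refine ⟨fun _ ↦ ?_, fun _ ↦ ?_⟩
  · obtain ⟨c, hc⟩ := exists_ne (0 : CharacterModule A)
    obtain ⟨a, ha⟩ := DFunLike.ne_iff.mp hc
    exact ⟨a, 0, fun h ↦ ha (by rw [h, map_zero]; rfl)⟩
  · obtain ⟨a, ha⟩ := exists_ne (0 : A)
    obtain ⟨c, hc⟩ := CharacterModule.exists_character_apply_ne_zero_of_ne_zero ha
    exact ⟨c, 0, fun h ↦ hc (by rw [h]; rfl)⟩

theorem CharacterModule.annihilator_le_annihilator (X : Type*) [AddCommGroup X] [Module R X] :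
    Module.annihilator R X ≤ Module.annihilator R (CharacterModule X) := by
  intro r hr
  rw [Module.mem_annihilator] at hr ⊢
  intro c
  ext x
  change c (r • x) = 0
  rw [hr, map_zero]

theorem nontrivial_linearMap_of_annihilator_le [IsNoetherianRing R] [Module.Finite R N]
    {E : Type*} [AddCommGroup E] [Module R E] [Nontrivial E]
    (h : Module.annihilator R N ≤ Module.annihilator R E) : Nontrivial (N →ₗ[R] E) := by
  obtain ⟨p, hp⟩ := associatedPrimes.nonempty R E
  obtain ⟨hprime, ι, hι⟩ := (isAssociatedPrime_iff_exists_injective_linearMap p E).mp hp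
  have hNp : Module.annihilator R N ≤ p :=
    h.trans (Submodule.annihilator_top (R := R) (M := E) ▸ hp.annihilator_le)
  have := nontrivial_linearMap_quotient_of_annihilator_le p hNp
  obtain ⟨ψ, hψ⟩ := exists_ne (0 : N →ₗ[R] R ⧸ p)
  refine ⟨ι ∘ₗ ψ, 0, fun h ↦ hψ ?_⟩
  ext n
  exact hι (by simpa using congr($h n))

theorem nontrivial_tensorProduct_of_annihilator_le [IsNoetherianRing R] [Module.Finite R N]
    {X : Type*} [AddCommGroup X] [Module R X] [Nontrivial X]
    (h : Module.annihilator R N ≤ Module.annihilator R X) : Nontrivial (X ⊗[R] N) := by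
  have := (CharacterModule.nontrivial_iff X).mpr ‹_›
  have := nontrivial_linearMap_of_annihilator_le
    (h.trans (CharacterModule.annihilator_le_annihilator X))
  have : Nontrivial (CharacterModule (N ⊗[R] X)) := CharacterModule.homEquiv.symm.nontrivial
  have := (CharacterModule.nontrivial_iff (N ⊗[R] X)).mp this
  exact (TensorProduct.comm R X N).toEquiv.nontrivial

theorem subsingleton_tensorProduct_of_annihilator_smul_top_eq_top {M : Type*} [AddCommGroup M]
    [Module R M] (h : Module.annihilator R N • (⊤ : Submodule R M) = ⊤) :
    Subsingleton (M ⊗[R] N) := by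
  have htmul : ∀ (m : M) (n : N), m ⊗ₜ[R] n = 0 := by
    intro m n
    refine Submodule.smul_induction_on (h.ge Submodule.mem_top : m ∈ _) (fun a ha x _ ↦ ?_)
      fun x y hx hy ↦ by rw [add_tmul, hx, hy, add_zero]
    rw [smul_tmul, Module.mem_annihilator.mp ha n, tmul_zero]
  exact subsingleton_of_forall_eq 0 fun z ↦
    z.induction_on rfl htmul fun _ _ hx hy ↦ by rw [hx, hy, add_zero]

theorem subsingleton_tensorProduct_iff_annihilator_smul_top_eq_top [IsNoetherianRing R]
    [Module.Finite R N] (M : Type*) [AddCommGroup M] [Module R M] :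
    Subsingleton (M ⊗[R] N) ↔ Module.annihilator R N • (⊤ : Submodule R M) = ⊤ := by
  refine ⟨fun h ↦ ?_, subsingleton_tensorProduct_of_annihilator_smul_top_eq_top⟩
  set I := Module.annihilator R N
  rw [← Submodule.Quotient.subsingleton_iff, ← not_nontrivial_iff_subsingleton]
  intro hQ
  have hI : I ≤ Module.annihilator R (M ⧸ I • (⊤ : Submodule R M)) := by
    rw [Submodule.annihilator_quotient]
    exact fun a ha ↦ Submodule.mem_colon.mpr fun m _ ↦ Submodule.smul_mem_smul ha Submodule.mem_top
  have := nontrivial_tensorProduct_of_annihilator_le hI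
  exact not_subsingleton _
    (LinearMap.rTensor_surjective N (Submodule.mkQ_surjective (I • ⊤ : Submodule R M))).subsingleton

theorem subsingleton_tensorProduct_iff_quotient_annihilator [IsNoetherianRing R]
    [Module.Finite R N] (X : Type*) [AddCommGroup X] [Module R X] :
    Subsingleton (X ⊗[R] N) ↔ Subsingleton (X ⊗[R] (R ⧸ Module.annihilator R N)) := by
  rw [subsingleton_tensorProduct_iff_annihilator_smul_top_eq_top,
    subsingleton_tensorProduct_iff_annihilator_smul_top_eq_top, Ideal.annihilator_quotient]

theorem support_tensorProduct_eq_support_quotient [IsNoetherianRing R] [Module.Finite R N]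
    (M : Type*) [AddCommGroup M] [Module R M] :
    Module.support R (M ⊗[R] N) =
      Module.support R (M ⧸ Module.annihilator R N • (⊤ : Submodule R M)) := by
  rw [← (tensorQuotEquivQuotSMul M _).support_eq]
  ext p
  simp only [Module.mem_support_iff, (LocalizedModule.equivTensorProduct _ _).nontrivial_congr,
    ← (TensorProduct.assoc R _ M _).nontrivial_congr]
  rw [← not_iff_not, not_nontrivial_iff_subsingleton, not_nontrivial_iff_subsingleton]
  exact subsingleton_tensorProduct_iff_quotient_annihilator _

end

/-- For a Noetherian ring `R`, an `R`-module `M` and a finitely generated `R`-module `N`: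
`M ⊗_R N = 0` iff `M = ann_R(N)·M`; consequently
`Supp_R(M ⊗_R N) = Supp_R(M / ann_R(N)·M)`. -/
theorem tensor_eq_zero_iff_and_support_eq
    {R : Type u} [CommRing R] [IsNoetherianRing R]
    (M : Type u) [AddCommGroup M] [Module R M]
    (N : Type u) [AddCommGroup N] [Module R N] [Module.Finite R N] :
    (Subsingleton (TensorProduct R M N) ↔
      (⊤ : Submodule R N).annihilator • (⊤ : Submodule R M) = ⊤) ∧
    Module.support R (TensorProduct R M N) =
      Module.support R (M ⧸ ((⊤ : Submodule R N).annihilator • (⊤ : Submodule R M))) := by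
  rw [Submodule.annihilator_top]
  exact ⟨subsingleton_tensorProduct_iff_annihilator_smul_top_eq_top M,
    support_tensorProduct_eq_support_quotient M⟩
end

section
/- Let R be a commutative Noetherian ring, a an ideal of R, and M an R-module such that M/aM is a finitely generated R-module. Then the a-adic completion of M is a finitely generated module over the a-adic completion of R. -/
universe u

open LinearMap

/-- If the range of `f` together with `I • ⊤` spans all of `N`, then the induced map on
adic completions is surjective. -/
theorem AdicCompletion.map_surjective_of_range_sup_smul_eq_top
    {R : Type u} [CommRing R] (I : Ideal R)
    {M : Type u} [AddCommGroup M] [Module R M]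
    {N : Type u} [AddCommGroup N] [Module R N]
    (f : M →ₗ[R] N) (hf : LinearMap.range f ⊔ I • (⊤ : Submodule R N) = ⊤) :
    Function.Surjective (AdicCompletion.map I f) := by
  intro y
  apply AdicCompletion.induction_on I N y (fun b ↦ ?_)
  have key : ∀ n : ℕ, (I ^ n • ⊤ : Submodule R N) =
      Submodule.map f (I ^ n • ⊤ : Submodule R M) ⊔ (I ^ (n + 1) • ⊤ : Submodule R N) := by
    intro n
    conv_lhs => rw [← hf]
    rw [Submodule.smul_sup, Submodule.map_smul'', Submodule.map_top, smul_smul,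
      ← pow_succ]
  have step : ∀ (n : ℕ) (r : M), f r - b n ∈ (I ^ n • ⊤ : Submodule R N) →
      ∃ d ∈ (I ^ n • ⊤ : Submodule R M),
        f (r + d) - b (n + 1) ∈ (I ^ (n + 1) • ⊤ : Submodule R N) := by
    intro n r hr
    have h1 : (b (n + 1) : N) - b n ∈ (I ^ n • ⊤ : Submodule R N) := by
      rw [← Submodule.Quotient.eq]
      exact AdicCauchySequence.mk_eq_mk (Nat.le_succ n) b
    have hmem : (b (n + 1) : N) - f r ∈ (I ^ n • ⊤ : Submodule R N) := by
      have h2 := Submodule.add_mem _ h1 (Submodule.neg_mem _ hr)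
      convert h2 using 1
      abel
    rw [key n] at hmem
    obtain ⟨u, hu, v, hv, huv⟩ := Submodule.mem_sup.mp hmem
    obtain ⟨d, hd, hfd⟩ := hu
    refine ⟨d, hd, ?_⟩
    have hb : (b (n + 1) : N) = u + v + f r := by
      rw [huv]; abel
    have heq : f (r + d) - b (n + 1) = -v := by
      rw [map_add, hfd, hb]; abel
    rw [heq]
    exact Submodule.neg_mem _ hv
  let g : ∀ n : ℕ, {r : M // f r - b n ∈ (I ^ n • ⊤ : Submodule R N)} :=
    fun n ↦ Nat.rec ⟨0, by simp⟩
      (fun n p ↦ ⟨p.1 + (step n p.1 p.2).choose, (step n p.1 p.2).choose_spec.2⟩) n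
  have hseq : ∀ n, (g (n + 1)).1 - (g n).1 ∈ (I ^ n • ⊤ : Submodule R M) := by
    intro n
    show ((g n).1 + (step n (g n).1 (g n).2).choose) - (g n).1 ∈ _
    have := (step n (g n).1 (g n).2).choose_spec.1
    convert this using 1
    abel
  refine ⟨AdicCompletion.mk I M (AdicCauchySequence.mk I M
      (fun n ↦ (g n).1) (fun n ↦ ?_)), ?_⟩
  · rw [SModEq.sub_mem]
    have := Submodule.neg_mem _ (hseq n)
    convert this using 1
    abel
  · ext n
    simp only [AdicCompletion.map_val_apply, AdicCompletion.mk_apply_coe,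
      Submodule.mkQ_apply, LinearMap.reduceModIdeal_apply, AdicCauchySequence.mk_coe]
    rw [Submodule.Quotient.eq]
    exact (g n).2

/-- If `M/aM` is a finitely generated `R`-module, then the `a`-adic completion of `M` is
finitely generated over the `a`-adic completion of `R`. -/
theorem adicCompletion_finite_of_quotient_finite
    {R : Type u} [CommRing R] [IsNoetherianRing R] (a : Ideal R)
    (M : Type u) [AddCommGroup M] [Module R M]
    (h : Module.Finite R (M ⧸ (a • (⊤ : Submodule R M)))) :
    Module.Finite (AdicCompletion a R) (AdicCompletion a M) := by
  obtain ⟨n, p, hp⟩ := Module.Finite.exists_fin' R (M ⧸ (a • (⊤ : Submodule R M)))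
  -- lift `p` through the quotient map using projectivity of `Fin n → R`
  obtain ⟨f, hf⟩ := Module.projective_lifting_property
    (Submodule.mkQ (a • (⊤ : Submodule R M))) p
    (Submodule.mkQ_surjective _)
  have hrange : LinearMap.range f ⊔ a • (⊤ : Submodule R M) = ⊤ := by
    have : Submodule.map (Submodule.mkQ (a • (⊤ : Submodule R M))) (LinearMap.range f) = ⊤ := by
      rw [← LinearMap.range_comp, hf, LinearMap.range_eq_top.mpr hp]
    have h2 := congrArg (Submodule.comap (Submodule.mkQ (a • (⊤ : Submodule R M)))) this
    rwa [Submodule.comap_map_mkQ, Submodule.comap_top, sup_comm] at h2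
  have hsurj := AdicCompletion.map_surjective_of_range_sup_smul_eq_top a f hrange
  have : Module.Finite (AdicCompletion a R) (AdicCompletion a (Fin n → R)) :=
    Module.Finite.equiv (AdicCompletion.piEquivFin a n).symm
  exact Module.Finite.of_surjective (AdicCompletion.map a f) hsurj
end

section
/- Let R be a commutative Noetherian ring and a an ideal of R. (i) Any submodule of an a-adically separated R-module is a-adically separated. (ii) Any homomorphic image of an a-adically quasi-complete R-module is a-adically quasi-complete. -/
universe u

open AdicCompletion Submodule

variable {R : Type*} [CommRing R] {I : Ideal R} {M N : Type*}
  [AddCommGroup M] [Module R M] [AddCommGroup N] [Module R N]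

theorem IsHausdorff.of_injective [IsHausdorff I N] {f : M →ₗ[R] N} (hf : Function.Injective f) :
    IsHausdorff I M where
  haus' x hx := hf <| by
    rw [_root_.map_zero]
    refine IsHausdorff.haus ‹_› (f x) fun n ↦ ?_
    simpa using ((hx n).map f).mono (map_le_iff_le_comap.mpr (smul_top_le_comap_smul_top _ f))

instance IsHausdorff.submodule [IsHausdorff I M] (P : Submodule R M) : IsHausdorff I P :=
  .of_injective P.injective_subtype

theorem IsPrecomplete.of_surjective [IsPrecomplete I M] {f : M →ₗ[R] N}
    (hf : Function.Surjective f) : IsPrecomplete I N := by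
  rw [← of_surjective_iff]
  intro y
  obtain ⟨z, rfl⟩ := map_surjective I hf y
  obtain ⟨x, rfl⟩ := AdicCompletion.of_surjective I M z
  exact ⟨f x, (map_of I f x).symm⟩

theorem separated_submodule_and_quasiComplete_image_general
    {R : Type u} [CommRing R] (a : Ideal R) :
    (∀ (M : Type u) [AddCommGroup M] [Module R M],
      Function.Injective (AdicCompletion.of a M) →
      ∀ N : Submodule R M, Function.Injective (AdicCompletion.of a N)) ∧
    (∀ (M : Type u) [AddCommGroup M] [Module R M]
      (N : Type u) [AddCommGroup N] [Module R N] (f : M →ₗ[R] N),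
      Function.Surjective f →
      Function.Surjective (AdicCompletion.of a M) →
      Function.Surjective (AdicCompletion.of a N)) := by
  refine ⟨fun M _ _ hM N ↦ ?_, fun M _ _ N _ _ f hf hM ↦ ?_⟩
  · have := of_injective_iff.mp hM
    exact of_injective a N
  · have := of_surjective_iff.mp hM
    exact of_surjective_iff.mpr (.of_surjective hf)

/-- (i) A submodule of an `a`-adically separated module is `a`-adically separated.
(ii) A homomorphic image of an `a`-adically quasi-complete module is `a`-adically
quasi-complete.  Here `M` is separated (resp. quasi-complete) iff the completion map
`M → lim M/aⁿM` is injective (resp. surjective). -/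
theorem separated_submodule_and_quasiComplete_image
    {R : Type u} [CommRing R] [IsNoetherianRing R] (a : Ideal R) :
    (∀ (M : Type u) [AddCommGroup M] [Module R M],
      Function.Injective (AdicCompletion.of a M) →
      ∀ N : Submodule R M, Function.Injective (AdicCompletion.of a N)) ∧
    (∀ (M : Type u) [AddCommGroup M] [Module R M]
      (N : Type u) [AddCommGroup N] [Module R N] (f : M →ₗ[R] N),
      Function.Surjective f →
      Function.Surjective (AdicCompletion.of a M) →
      Function.Surjective (AdicCompletion.of a N)) :=
  separated_submodule_and_quasiComplete_image_general a
end

section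
/- Let (R, m) be a Noetherian local ring and let L : 0 → L_s → ⋯ → L_1 → L_0 → 0 be a complex of R-modules such that for every 1 ≤ i ≤ s: (a) depth_R(L_i) ≥ i, and (b) H_i(L) = 0 or depth_R(H_i(L)) = 0. Then H_i(L) = 0 for every 1 ≤ i ≤ s. -/
/-!
Measure depth through `Ext` out of the residue field `k`: by Rees' theorem, `depth M ≥ n` amounts
to `Ext^i(k, M) = 0` for `i < n`. Let `B_i = im d_{i+1}` and `Z_i = ker d_i` inside `L_i`.
Descending induction from `B_s = 0` shows `depth B_i ≥ i + 1`. Since `Z_i ⊆ L_i` has positive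
depth and `depth B_i ≥ 2`, the sequence `0 → B_i → Z_i → H_i → 0` gives `Hom(k, H_i) = 0`,
so `H_i = 0` by (b). Then `B_i = Z_i`, and `0 → Z_i → L_i → B_{i-1} → 0` gives
`depth B_{i-1} ≥ min(depth L_i, depth B_i - 1) ≥ i`.
-/

universe v w

open CategoryTheory Abelian

namespace CategoryTheory.Abelian.Ext

variable {C : Type*} [Category C] [Abelian C] [HasExt C]

lemma subsingleton_of_isZero_right (X : C) {M : C} (hM : Limits.IsZero M) (n : ℕ) :
    Subsingleton (Ext X M n) := by
  refine ⟨fun x y => ?_⟩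
  rw [← x.comp_mk₀_id, ← y.comp_mk₀_id, hM.eq_of_src (𝟙 M) 0, mk₀_zero, comp_zero,
    comp_zero]

lemma subsingleton_zero_of_mono (X : C) {A B : C} (f : A ⟶ B) [Mono f]
    (h : Subsingleton (Ext X B 0)) : Subsingleton (Ext X A 0) :=
  (postcomp_mk₀_injective_of_mono X f).subsingleton

lemma subsingleton_X₃_of_shortExact (X : C) {S : ShortComplex C} (hS : S.ShortExact) {n : ℕ}
    (h₁ : ∀ i < n + 1, Subsingleton (Ext X S.X₁ i))
    (h₂ : ∀ i < n, Subsingleton (Ext X S.X₂ i)) :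
    ∀ i < n, Subsingleton (Ext X S.X₃ i) := by
  intro i hi
  refine subsingleton_of_forall_eq 0 fun z => ?_
  have := h₁ (i + 1) (by omega)
  obtain ⟨y, rfl⟩ := covariant_sequence_exact₃ X hS z rfl (Subsingleton.elim _ _)
  have := h₂ i hi
  rw [Subsingleton.elim y 0, zero_comp]

end CategoryTheory.Abelian.Ext

namespace CategoryTheory.ShortComplex

section

variable {R : Type u} [Ring R] (S : ShortComplex (ModuleCat.{v} R))

lemma range_f_le_ker_g : LinearMap.range S.f.hom ≤ LinearMap.ker S.g.hom :=
  LinearMap.range_le_ker_iff.mpr (ModuleCat.hom_ext_iff.mp S.zero)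

lemma range_moduleCatToCycles : LinearMap.range S.moduleCatToCycles =
    (LinearMap.range S.f.hom).comap (LinearMap.ker S.g.hom).subtype := by
  ext z
  exact ⟨fun ⟨x, hx⟩ => ⟨x, congrArg Subtype.val hx⟩,
    fun ⟨x, hx⟩ => ⟨x, Subtype.ext hx⟩⟩

lemma exact_inclusion_range_f_mkQ : Function.Exact (Submodule.inclusion S.range_f_le_ker_g)
    (LinearMap.range S.moduleCatToCycles).mkQ := by
  intro z
  rw [Submodule.mkQ_apply, Submodule.Quotient.mk_eq_zero, range_moduleCatToCycles,
    ← Submodule.range_inclusion _ _ S.range_f_le_ker_g]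
  rfl

variable [HasExt.{w} (ModuleCat.{v} R)] (X : ModuleCat.{v} R)

lemma subsingleton_ext_homology_zero (h₂ : Subsingleton (Ext X S.X₂ 0))
    (hB : ∀ i < 2, Subsingleton (Ext X (ModuleCat.of R (LinearMap.range S.f.hom)) i)) :
    Subsingleton (Ext X S.homology 0) := by
  have hSE := ModuleCat.shortComplex_shortExact (ModuleCat.shortComplexOfCompEqZero _ _
      S.exact_inclusion_range_f_mkQ.linearMap_comp_eq_zero) S.exact_inclusion_range_f_mkQ
    (Submodule.inclusion_injective S.range_f_le_ker_g) (Submodule.mkQ_surjective _)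
  have : Mono (ModuleCat.ofHom (LinearMap.ker S.g.hom).subtype) :=
    (ModuleCat.mono_iff_injective _).mpr (Submodule.injective_subtype _)
  have hZ :=
    Ext.subsingleton_zero_of_mono X (ModuleCat.ofHom (LinearMap.ker S.g.hom).subtype) h₂
  refine Ext.subsingleton_zero_of_mono X S.moduleCatHomologyIso.hom ?_
  refine Ext.subsingleton_X₃_of_shortExact X hSE (n := 1) hB (fun i hi => ?_) 0 one_pos
  obtain rfl : i = 0 := by omega
  exact hZ

lemma subsingleton_ext_range_g_of_exact (hS : S.Exact) {n : ℕ}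
    (hB : ∀ i < n + 1, Subsingleton (Ext X (ModuleCat.of R (LinearMap.range S.f.hom)) i))
    (h₂ : ∀ i < n, Subsingleton (Ext X S.X₂ i)) :
    ∀ i < n, Subsingleton (Ext X (ModuleCat.of R (LinearMap.range S.g.hom)) i) := by
  have hSE := S.g.hom.rangeRestrict.shortExact_shortComplexKer S.g.hom.surjective_rangeRestrict
  refine Ext.subsingleton_X₃_of_shortExact X hSE ?_ h₂
  dsimp only
  rw [LinearMap.ker_rangeRestrict, ← hS.moduleCat_range_eq_ker]
  exact hB

end

lemma moduleFinite_homology {R : Type u} [Ring R] [IsNoetherianRing R]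
    (S : ShortComplex (ModuleCat.{v} R)) [Module.Finite R S.X₂] : Module.Finite R S.homology :=
  have : Module.Finite R S.moduleCatLeftHomologyData.H := Module.Finite.quotient R _
  Module.Finite.equiv S.moduleCatHomologyIso.toLinearEquiv.symm

end CategoryTheory.ShortComplex

namespace ChainComplex

variable {R : Type u} [Ring R] (L : ChainComplex (ModuleCat.{v} R) ℕ)

lemma moduleFinite_homology [IsNoetherianRing R] (i : ℕ) [Module.Finite R (L.X i)] :
    Module.Finite R (L.homology i) :=
  have : Module.Finite R (L.sc i).X₂ := ‹Module.Finite R (L.X i)›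
  (L.sc i).moduleFinite_homology

variable [HasExt.{w} (ModuleCat.{v} R)] (X : ModuleCat.{v} R)

lemma subsingleton_ext_homology_succ_zero (j : ℕ) (hL : Subsingleton (Ext X (L.X (j + 1)) 0))
    (hB : ∀ n < 2,
      Subsingleton (Ext X (ModuleCat.of R (LinearMap.range (L.d (j + 2) (j + 1)).hom)) n)) :
    Subsingleton (Ext X (L.homology (j + 1)) 0) :=
  Ext.subsingleton_zero_of_mono X (L.homologyIsoSc' (j + 2) (j + 1) j (by simp) (by simp)).hom
    ((L.sc' (j + 2) (j + 1) j).subsingleton_ext_homology_zero X hL hB)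

lemma subsingleton_ext_range_d_of_subsingleton_homology (j : ℕ)
    [Subsingleton (L.homology (j + 1))] {n : ℕ}
    (hB : ∀ i < n + 1,
      Subsingleton (Ext X (ModuleCat.of R (LinearMap.range (L.d (j + 2) (j + 1)).hom)) i))
    (hL : ∀ i < n, Subsingleton (Ext X (L.X (j + 1)) i)) :
    ∀ i < n, Subsingleton (Ext X (ModuleCat.of R (LinearMap.range (L.d (j + 1) j).hom)) i) :=
  (L.sc' (j + 2) (j + 1) j).subsingleton_ext_range_g_of_exact X
    ((L.exactAt_iff' (j + 2) (j + 1) j (by simp) (by simp)).mp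
      ((L.exactAt_iff_isZero_homology _).mpr (ModuleCat.isZero_of_subsingleton _))) hB hL

theorem subsingleton_homology_of_subsingleton_ext (s : ℕ)
    (hb : ∀ i, s < i → Limits.IsZero (L.X i))
    (hL : ∀ i, 1 ≤ i → i ≤ s → ∀ n < i, Subsingleton (Ext X (L.X i) n))
    (hH : ∀ i, 1 ≤ i → i ≤ s → Subsingleton (Ext X (L.homology i) 0) →
      Subsingleton (L.homology i)) :
    ∀ i, 1 ≤ i → i ≤ s → Subsingleton (L.homology i) := by
  have acyclic_of_depth_boundaries : ∀ j, j + 1 ≤ s → (∀ n < j + 2, Subsingleton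
      (Ext X (ModuleCat.of R (LinearMap.range (L.d (j + 2) (j + 1)).hom)) n)) →
      Subsingleton (L.homology (j + 1)) := fun j hj hB =>
    hH (j + 1) (by omega) hj (L.subsingleton_ext_homology_succ_zero X j
      (hL (j + 1) (by omega) hj 0 (by omega)) fun n hn => hB n (by omega))
  have depth_boundaries : ∀ i ≤ s, ∀ n < i + 1,
      Subsingleton (Ext X (ModuleCat.of R (LinearMap.range (L.d (i + 1) i).hom)) n) := by
    intro i hi
    induction hi using Nat.decreasingInduction with
    | self =>
      have : Subsingleton (L.X (s + 1)) := ModuleCat.subsingleton_of_isZero (hb _ (by omega))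
      have := (L.d (s + 1) s).hom.surjective_rangeRestrict.subsingleton
      exact fun n _ => Ext.subsingleton_of_isZero_right X (ModuleCat.isZero_of_subsingleton _) n
    | of_succ j hj hB =>
      have := acyclic_of_depth_boundaries j hj hB
      exact L.subsingleton_ext_range_d_of_subsingleton_homology X j hB (hL (j + 1) (by omega) hj)
  intro i hi his
  obtain ⟨j, rfl⟩ := Nat.exists_eq_add_of_le' hi
  exact acyclic_of_depth_boundaries j his (depth_boundaries (j + 1) his)

end ChainComplex

namespace IsLocalRing

open RingTheory.Sequence

variable {R : Type u} [CommRing R] [IsLocalRing R] [IsNoetherianRing R]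

lemma subsingleton_ext_quotient_maximalIdeal_of_isWeaklyRegular (M : ModuleCat.{u} R)
    [Module.Finite R M] {rs : List R} (hmem : ∀ r ∈ rs, r ∈ maximalIdeal R)
    (hreg : IsWeaklyRegular M rs) :
    ∀ i < rs.length, Subsingleton (Ext (ModuleCat.of R (R ⧸ maximalIdeal R)) M i) := by
  cases subsingleton_or_nontrivial M with
  | inl _ =>
    exact fun i _ => Ext.subsingleton_of_isZero_right _ (ModuleCat.isZero_of_subsingleton M) i
  | inr _ =>
    refine ModuleCat.subsingleton_ext_of_exists_isRegular (maximalIdeal R) _ ?_ M ?_ rs hmem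
      ((isRegular_iff_isWeaklyRegular_of_subset_maximalIdeal hmem).mpr hreg)
    · rw [Module.support_eq_zeroLocus, Ideal.annihilator_quotient]
    · rw [← ringJacobson_eq_maximalIdeal]
      exact Submodule.jacobson_smul_lt_top ⊤

lemma exists_isSMulRegular_of_subsingleton_ext_zero (M : ModuleCat.{u} R) [Module.Finite R M]
    (h : Subsingleton (Ext (ModuleCat.of R (R ⧸ maximalIdeal R)) M 0)) :
    ∃ r ∈ maximalIdeal R, IsSMulRegular M r := by
  have : Subsingleton (R ⧸ maximalIdeal R →ₗ[R] M) :=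
    (Ext.addEquiv₀.trans (ModuleCat.homAddEquiv (M := ModuleCat.of R (R ⧸ maximalIdeal R))
      (N := M))).symm.subsingleton
  simpa [Ideal.annihilator_quotient] using IsSMulRegular.subsingleton_linearMap_iff.mp this

end IsLocalRing

/-- Acyclicity Lemma (Peskine–Szpiro).  Let `(R, m)` be Noetherian local and
`L : 0 → L_s → ⋯ → L_0 → 0` a complex of finitely generated modules such that for all
`1 ≤ i ≤ s`: (a) `depth L_i ≥ i` (there is a weakly regular sequence of length `i` in `m`
on `L_i`), and (b) `H_i(L) = 0` or `depth H_i(L) = 0` (every element of `m` is a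
zerodivisor on `H_i(L)`).  Then `H_i(L) = 0` for all `1 ≤ i ≤ s`. -/
theorem acyclicity_lemma
    {R : Type u} [CommRing R] [IsNoetherianRing R] [IsLocalRing R]
    (s : ℕ) (L : ChainComplex (ModuleCat.{u} R) ℕ)
    (hb : ∀ i, s < i → Limits.IsZero (L.X i))
    (hfg : ∀ i, Module.Finite R ↥(L.X i))
    (ha : ∀ i, 1 ≤ i → i ≤ s →
      ∃ rs : List R, rs.length = i ∧ (∀ r ∈ rs, r ∈ IsLocalRing.maximalIdeal R) ∧
        RingTheory.Sequence.IsWeaklyRegular ↥(L.X i) rs)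
    (hdepth0 : ∀ i, 1 ≤ i → i ≤ s →
      Subsingleton ↥(L.homology i) ∨
        ∀ r ∈ IsLocalRing.maximalIdeal R,
          ∃ x : ↥(L.homology i), x ≠ 0 ∧ r • x = 0) :
    ∀ i, 1 ≤ i → i ≤ s → Subsingleton ↥(L.homology i) := by
  refine L.subsingleton_homology_of_subsingleton_ext
    (ModuleCat.of R (R ⧸ IsLocalRing.maximalIdeal R)) s hb (fun i hi his => ?_)
    (fun i hi his hext => ?_)
  · obtain ⟨rs, rfl, hmem, hreg⟩ := ha i hi his
    exact IsLocalRing.subsingleton_ext_quotient_maximalIdeal_of_isWeaklyRegular _ hmem hreg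
  · rcases hdepth0 i hi his with hH | hzd
    · exact hH
    have := L.moduleFinite_homology i
    obtain ⟨r, hr, hreg⟩ := IsLocalRing.exists_isSMulRegular_of_subsingleton_ext_zero _ hext
    obtain ⟨x, hx, hrx⟩ := hzd r hr
    exact absurd (hreg (hrx.trans (smul_zero r).symm)) hx
end

section
/- Let R be a commutative Noetherian ring, a an ideal of R, and M an R-module. Let F : 0 → F_s → F_{s-1} → ⋯ → F_1 → F_0 → 0 be a complex of finitely generated free R-modules such that H_i(F ⊗_R B) = 0 for every 1 ≤ i ≤ s, where B is an R-module. Then depth_R(a, H_0(F) ⊗_R B) ≥ depth_R(a, B) − s, where depth here can be interpreted via the Ext-characterization depth_R(a, N) = inf{i : Ext^i_R(R/a, N) ≠ 0}. -/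
universe u

open CategoryTheory

/-- The depth of `N` with respect to the ideal `a`, interpreted via the Ext
characterization: `depth_R(a, N) = inf {i : Ext^i_R(R/a, N) ≠ 0}` (an element of `ℕ∞`,
with `inf ∅ = ∞`). -/
noncomputable def extDepth {R : Type u} [CommRing R] (a : Ideal R)
    (N : ModuleCat.{u} R) : ℕ∞ :=
  sInf {n : ℕ∞ | ∃ i : ℕ, n = (i : ℕ∞) ∧
    ¬ Subsingleton ↥(((Ext R (ModuleCat.{u} R) i).obj
        (Opposite.op (ModuleCat.of R (R ⧸ a)))).obj N)}

open CategoryTheory Limits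
set_option linter.unusedVariables false
set_option maxHeartbeats 1000000

noncomputable section
namespace DepthAux
variable {R : Type u} [CommRing R]

lemma subsingleton_of_isZero {M : ModuleCat.{u} R} (h : IsZero M) : Subsingleton M := by
  refine ⟨fun x y => ?_⟩
  have h1 : (𝟙 M : M ⟶ M) = 0 := h.eq_of_src _ _
  have : ∀ z : M, z = 0 := fun z => by
    calc z = (𝟙 M : M ⟶ M) z := rfl
    _ = (0 : M ⟶ M) z := by rw [h1]
    _ = 0 := rfl
  rw [this x, this y]

lemma subsingleton_iff_isZero (M : ModuleCat.{u} R) : Subsingleton M ↔ IsZero M :=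
  ⟨fun h => ModuleCat.isZero_of_subsingleton M, subsingleton_of_isZero⟩

lemma subsingleton_of_iso {M N : ModuleCat.{u} R} (e : M ≅ N) (h : Subsingleton M) :
    Subsingleton N :=
  (subsingleton_iff_isZero N).2 (((subsingleton_iff_isZero M).1 h).of_iso e.symm)

lemma isZero_X₂_of_exact {E : ShortComplex (ModuleCat.{u} R)} (hE : E.Exact)
    (h1 : Subsingleton E.X₁) (h3 : Subsingleton E.X₃) : IsZero E.X₂ := by
  rw [ShortComplex.moduleCat_exact_iff] at hE
  rw [← subsingleton_iff_isZero]
  refine ⟨fun x y => ?_⟩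
  have hz : ∀ z : E.X₂, z = 0 := by
    intro z
    obtain ⟨w, hw⟩ := hE z (Subsingleton.elim _ _)
    rw [← hw, Subsingleton.elim w 0, map_zero]
  rw [hz x, hz y]

variable (X : ModuleCat.{u} R) (P : ProjectiveResolution X)

/-- postcomposition as a morphism of hom-modules -/
def postcomp (M : ModuleCat.{u} R) {N N' : ModuleCat.{u} R} (f : N ⟶ N') :
    ModuleCat.of R (M ⟶ N) ⟶ ModuleCat.of R (M ⟶ N') := ModuleCat.ofHom
  { toFun φ := φ ≫ f
    map_add' φ ψ := Preadditive.add_comp _ _ _ _ _ _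
    map_smul' r φ := Linear.smul_comp _ _ _ _ _ _ }

/-- The cochain complex `Hom(P, N)`. -/
abbrev hc (N : ModuleCat.{u} R) : CochainComplex (ModuleCat.{u} R) ℕ :=
  P.complex.linearYonedaObj R N

lemma subsingleton_E_iff (i : ℕ) (N : ModuleCat.{u} R) :
    Subsingleton (((Ext R (ModuleCat.{u} R) i).obj (Opposite.op X)).obj N) ↔
      IsZero ((hc X P N).homology i) := by
  rw [subsingleton_iff_isZero]
  exact ⟨fun h => h.of_iso (P.isoExt i N).symm, fun h => h.of_iso (P.isoExt i N)⟩

/-- The chain map `Hom(P,N) ⟶ Hom(P,N')` induced by `f : N ⟶ N'`. -/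
def hcMap {N N' : ModuleCat.{u} R} (f : N ⟶ N') : hc X P N ⟶ hc X P N' where
  f i := postcomp _ f
  comm' i j _ := by
    ext φ
    simp only [ChainComplex.linearYonedaObj_d, ModuleCat.ofHom]
    change (Linear.leftComp R N' (P.complex.d j i)) (φ ≫ f) =
      postcomp _ f ((Linear.leftComp R N (P.complex.d j i)) φ)
    rfl

variable {S : ShortComplex (ModuleCat.{u} R)}

/-- The short complex of hom cochain complexes. -/
def hcSES (S : ShortComplex (ModuleCat.{u} R)) :
    ShortComplex (CochainComplex (ModuleCat.{u} R) ℕ) :=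
  ShortComplex.mk (hcMap X P S.f) (hcMap X P S.g) (by
    ext i φ
    change (φ ≫ S.f) ≫ S.g = 0
    exact (Category.assoc (φ : P.complex.X i ⟶ S.X₁) S.f S.g).trans ((congrArg _ S.zero).trans Limits.comp_zero))

lemma hcSES_shortExact (hS : S.ShortExact) : (hcSES X P S).ShortExact := by
  apply HomologicalComplex.shortExact_of_degreewise_shortExact
  intro i
  haveI := hS.mono_f
  haveI := hS.epi_g
  haveI := P.projective i
  refine ShortComplex.ShortExact.mk' ?_ ?_ ?_
  · rw [ShortComplex.moduleCat_exact_iff]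
    intro φ' hφ
    let φ : P.complex.X i ⟶ S.X₂ := φ'
    have hφ' : φ ≫ S.g = 0 := hφ
    have hrange := (S.moduleCat_exact_iff_range_eq_ker).1 hS.exact
    have hinj := hS.moduleCat_injective_f
    let e : S.X₁ ≃ₗ[R] LinearMap.range S.f.hom := LinearEquiv.ofInjective S.f.hom hinj
    have hmem : ∀ x : (P.complex.X i), φ x ∈ LinearMap.range S.f.hom := by
      intro x
      rw [hrange]
      refine LinearMap.mem_ker.2 ?_
      have : (φ ≫ S.g) x = (0 : P.complex.X i ⟶ S.X₃) x := by rw [hφ']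
      simpa using this
    refine ⟨ModuleCat.ofHom (e.symm.toLinearMap.comp (φ.hom.codRestrict (LinearMap.range S.f.hom) hmem)), ?_⟩
    refine ModuleCat.hom_ext (LinearMap.ext (fun x => ?_))
    change S.f (e.symm ⟨φ x, hmem x⟩) = φ x
    have := e.apply_symm_apply ⟨φ x, hmem x⟩
    have h2 : (e (e.symm ⟨φ x, hmem x⟩) : S.X₂) = φ x := by rw [this]
    rwa [LinearEquiv.ofInjective_apply] at h2
  · rw [ModuleCat.mono_iff_injective]
    intro φ0 ψ0 h
    let φ : P.complex.X i ⟶ S.X₁ := φ0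
    let ψ : P.complex.X i ⟶ S.X₁ := ψ0
    have h' : φ ≫ S.f = ψ ≫ S.f := h
    exact (cancel_mono S.f).1 h'
  · rw [ModuleCat.epi_iff_surjective]
    intro ψ0
    let ψ : P.complex.X i ⟶ S.X₃ := ψ0
    exact ⟨Projective.factorThru ψ S.g, Projective.factorThru_comp ψ S.g⟩

lemma vanish₂ (hS : S.ShortExact) (i : ℕ)
    (h1 : IsZero ((hc X P S.X₁).homology i)) (h3 : IsZero ((hc X P S.X₃).homology i)) :
    IsZero ((hc X P S.X₂).homology i) := by
  have hE := (hcSES_shortExact X P hS).homology_exact₂ i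
  exact isZero_X₂_of_exact hE (subsingleton_of_isZero h1) (subsingleton_of_isZero h3)

lemma vanish₃ (hS : S.ShortExact) (i : ℕ)
    (h2 : IsZero ((hc X P S.X₂).homology i))
    (h1 : IsZero ((hc X P S.X₁).homology (i + 1))) :
    IsZero ((hc X P S.X₃).homology i) := by
  have hE := (hcSES_shortExact X P hS).homology_exact₃ i (i + 1) rfl
  exact isZero_X₂_of_exact hE (subsingleton_of_isZero h2) (subsingleton_of_isZero h1)


/-- The vanishing predicate: all Ext^i(X, N) vanish for i < c. -/
def V (c : ℕ∞) (N : ModuleCat.{u} R) : Prop :=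
  ∀ i : ℕ, (i : ℕ∞) < c →
    Subsingleton (((Ext R (ModuleCat.{u} R) i).obj (Opposite.op X)).obj N)

lemma V_mono {c c' : ℕ∞} (h : c' ≤ c) {N : ModuleCat.{u} R} (hv : V X c N) : V X c' N :=
  fun i hi => hv i (lt_of_lt_of_le hi h)

lemma V_of_iso {c : ℕ∞} {N N' : ModuleCat.{u} R} (e : N ≅ N') (h : V X c N) : V X c N' :=
  fun i hi =>
    subsingleton_of_iso (((Ext R (ModuleCat.{u} R) i).obj (Opposite.op X)).mapIso e) (h i hi)

include P in
lemma V_of_subsingleton {c : ℕ∞} {N : ModuleCat.{u} R} (hN : Subsingleton N) : V X c N := by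
  intro i hi
  rw [subsingleton_E_iff X P i N]
  have hz : ∀ j, IsZero ((hc X P N).X j) := by
    intro j
    rw [ChainComplex.linearYonedaObj_X]
    have : Subsingleton (P.complex.X j ⟶ N) :=
      ⟨fun f g => ModuleCat.hom_ext (LinearMap.ext fun x => Subsingleton.elim _ _)⟩
    exact @ModuleCat.isZero_of_subsingleton R _ (ModuleCat.of R (P.complex.X j ⟶ N)) this
  have hK : IsZero (hc X P N) := by
    rw [IsZero.iff_id_eq_zero]
    apply HomologicalComplex.hom_ext
    intro j
    exact (hz j).eq_of_src _ _
  exact (HomologicalComplex.homologyFunctor (ModuleCat.{u} R) (ComplexShape.up ℕ) i).map_isZero hK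

include P in
lemma V_ses₂ (hS : S.ShortExact) {c : ℕ∞} (h1 : V X c S.X₁) (h3 : V X c S.X₃) :
    V X c S.X₂ := by
  intro i hi
  rw [subsingleton_E_iff X P]
  exact vanish₂ X P hS i ((subsingleton_E_iff X P i _).1 (h1 i hi))
    ((subsingleton_E_iff X P i _).1 (h3 i hi))

include P in
lemma V_ses₃ (hS : S.ShortExact) {c d : ℕ∞} (h1 : V X c S.X₁) (h2 : V X d S.X₂) :
    V X (min d (c - 1)) S.X₃ := by
  intro i hi
  have hid : (i : ℕ∞) < d := lt_of_lt_of_le hi (min_le_left _ _)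
  have hic : (i : ℕ∞) < c - 1 := lt_of_lt_of_le hi (min_le_right _ _)
  have hic' : ((i + 1 : ℕ) : ℕ∞) < c := by
    have := lt_tsub_iff_right.1 hic
    simpa using this
  rw [subsingleton_E_iff X P]
  exact vanish₃ X P hS i ((subsingleton_E_iff X P i _).1 (h2 i hid))
    ((subsingleton_E_iff X P (i + 1) _).1 (h1 (i + 1) hic'))

end DepthAux
end


namespace DepthAux

lemma iso_injective {R : Type u} [CommRing R] {M N : ModuleCat.{u} R} (φ : M ⟶ N) [IsIso φ] :
    Function.Injective φ :=
  (ModuleCat.mono_iff_injective φ).1 inferInstance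

lemma le_extDepth_iff {R : Type u} [CommRing R] (a : Ideal R) (c : ℕ∞) (N : ModuleCat.{u} R) :
    c ≤ extDepth a N ↔ DepthAux.V (ModuleCat.of R (R ⧸ a)) c N := by
  constructor
  · intro h i hi
    by_contra hns
    have hmem : ((i : ℕ∞)) ∈ {n : ℕ∞ | ∃ i' : ℕ, n = (i' : ℕ∞) ∧ ¬ Subsingleton
        ↥(((Ext R (ModuleCat.{u} R) i').obj (Opposite.op (ModuleCat.of R (R ⧸ a)))).obj N)} :=
      ⟨i, rfl, hns⟩
    exact absurd (lt_of_lt_of_le hi h) (not_lt.2 (sInf_le hmem))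
  · intro h
    refine le_sInf fun n hn => ?_
    obtain ⟨i, rfl, hns⟩ := hn
    exact le_of_not_gt fun hlt => hns (h i hlt)

end DepthAux

/-- Let `F : 0 → F_s → ⋯ → F_0 → 0` be a complex of finitely generated free modules such
that `H_i(F ⊗_R B) = 0` for `1 ≤ i ≤ s`.  Then
`depth_R(a, H_0(F) ⊗_R B) ≥ depth_R(a, B) − s`. -/
theorem depth_H0_tensor_ge
    {R : Type u} [CommRing R] [IsNoetherianRing R] (a : Ideal R)
    (B : Type u) [AddCommGroup B] [Module R B]
    (s : ℕ) (F : ChainComplex (ModuleCat.{u} R) ℕ)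
    (hb : ∀ i, s < i → Limits.IsZero (F.X i))
    (hfree : ∀ i, Module.Free R ↥(F.X i)) (hfin : ∀ i, Module.Finite R ↥(F.X i))
    (hex : ∀ i, 1 ≤ i → i ≤ s → Limits.IsZero
      ((((MonoidalCategory.tensorRight (ModuleCat.of R B)).mapHomologicalComplex
          (ComplexShape.down ℕ)).obj F).homology i)) :
    extDepth a (ModuleCat.of R B) - (s : ℕ∞) ≤
      extDepth a (ModuleCat.of R (TensorProduct R ↥(F.homology 0) B)) := by
  classical
  set X : ModuleCat.{u} R := ModuleCat.of R (R ⧸ a) with hX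
  let P : ProjectiveResolution X := ProjectiveResolution.of X
  set tR := MonoidalCategory.tensorRight (ModuleCat.of R B) with htR
  set G := (tR.mapHomologicalComplex (ComplexShape.down ℕ)).obj F with hG
  set dR := extDepth a (ModuleCat.of R B) with hdR
  -- subsingletonness above degree s
  have hGXsub : ∀ t, s < t → Subsingleton ↥(G.X t) := by
    intro t ht
    exact DepthAux.subsingleton_of_isZero (tR.map_isZero (hb t ht))
  -- vanishing of Ext against B
  have hVB : DepthAux.V X dR (ModuleCat.of R B) := (DepthAux.le_extDepth_iff a dR _).1 le_rfl
  -- vanishing of Ext against finite powers of B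
  have hVpin : ∀ n : ℕ, DepthAux.V X dR (ModuleCat.of R (Fin n → B)) := by
    intro n
    induction n with
    | zero =>
      exact DepthAux.V_of_subsingleton X P ⟨fun f g => funext fun i => i.elim0⟩
    | succ n ih =>
      let f1 : ModuleCat.of R B ⟶ ModuleCat.of R (Fin (n+1) → B) :=
        ModuleCat.ofHom (LinearMap.single R (fun _ : Fin (n+1) => B) 0)
      let g1 : ModuleCat.of R (Fin (n+1) → B) ⟶ ModuleCat.of R (Fin n → B) :=
        ModuleCat.ofHom (LinearMap.funLeft R B Fin.succ)
      let Sn : ShortComplex (ModuleCat.{u} R) := ShortComplex.mk f1 g1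
        (by
          refine ModuleCat.hom_ext (LinearMap.ext fun b => funext fun i => ?_)
          show Pi.single (M := fun _ : Fin (n+1) => B) 0 b i.succ = 0
          exact Pi.single_eq_of_ne (M := fun _ : Fin (n+1) => B) (Fin.succ_ne_zero i) b)
      have hSn : Sn.ShortExact := by
        refine ShortComplex.ShortExact.mk' ?_ ?_ ?_
        · rw [ShortComplex.moduleCat_exact_iff]
          intro v hv
          refine ⟨v 0, funext fun i => ?_⟩
          induction i using Fin.cases with
          | zero =>
            show Pi.single (M := fun _ : Fin (n+1) => B) 0 (v 0) 0 = v 0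
            exact Pi.single_eq_same (M := fun _ : Fin (n+1) => B) 0 (v 0)
          | succ j =>
            show Pi.single (M := fun _ : Fin (n+1) => B) 0 (v 0) j.succ = v j.succ
            rw [Pi.single_eq_of_ne (M := fun _ : Fin (n+1) => B) (Fin.succ_ne_zero j) (v 0)]
            have h0 : v j.succ = (0 : B) := congrFun hv j
            exact h0.symm
        · rw [ModuleCat.mono_iff_injective]
          exact Pi.single_injective (M := fun _ => B) 0
        · rw [ModuleCat.epi_iff_surjective]
          exact LinearMap.funLeft_surjective_of_injective R B _ (Fin.succ_injective n)
      exact DepthAux.V_ses₂ X P hSn hVB ih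
  -- vanishing of Ext against each G.X t
  have hVt : ∀ t, DepthAux.V X dR (G.X t) := by
    intro t
    haveI : Module.Free R ↥(F.X t) := hfree t
    haveI : Module.Finite R ↥(F.X t) := hfin t
    set ι := Module.Free.ChooseBasisIndex R ↥(F.X t) with hι
    let bb : Module.Basis ι R ↥(F.X t) := Module.Free.chooseBasis R ↥(F.X t)
    let e : TensorProduct R ↥(F.X t) B ≃ₗ[R] (Fin (Fintype.card ι) → B) :=
      (TensorProduct.congr bb.repr (LinearEquiv.refl R B)).trans
        ((TensorProduct.finsuppScalarLeft R B ι).trans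
          ((Finsupp.linearEquivFunOnFinite R B ι).trans
            (LinearEquiv.funCongrLeft R B (Fintype.equivFin ι).symm)))
    exact DepthAux.V_of_iso X e.symm.toModuleIso (hVpin (Fintype.card ι))
  -- exactness of G in the middle degrees
  have hrk : ∀ u : ℕ, u + 1 ≤ s →
      LinearMap.range (G.d (u+2) (u+1)).hom = LinearMap.ker (G.d (u+1) u).hom := by
    intro u hu
    have hEA : G.ExactAt (u+1) :=
      (HomologicalComplex.exactAt_iff_isZero_homology _ _).2 (hex (u+1) (by omega) hu)
    rw [G.exactAt_iff' (u+2) (u+1) u (by rw [ChainComplex.prev]; omega)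
      (ChainComplex.next_nat_succ u)] at hEA
    exact ((ShortComplex.moduleCat_exact_iff_range_eq_ker _).1 hEA)
  -- the descending induction
  have claim : ∀ k u : ℕ, u + 1 + k = s →
      DepthAux.V X (dR - k) (ModuleCat.of R ↥(LinearMap.range (G.d (u+1) u).hom)) := by
    intro k
    induction k with
    | zero =>
      intro u hu
      have hkb : LinearMap.ker (G.d (u+1) u).hom = ⊥ := by
        rw [← hrk u (by omega), LinearMap.range_eq_bot]
        haveI := hGXsub (u+2) (by omega)
        exact LinearMap.ext fun x => by rw [Subsingleton.elim x 0]; simp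
      have hbij : Function.Bijective ((G.d (u+1) u).hom.rangeRestrict) := by
        constructor
        · rw [← LinearMap.ker_eq_bot, LinearMap.ker_rangeRestrict, hkb]
        · exact LinearMap.surjective_rangeRestrict _
      let e := LinearEquiv.ofBijective ((G.d (u+1) u).hom.rangeRestrict) hbij
      exact DepthAux.V_of_iso X e.toModuleIso (DepthAux.V_mono X (by simp) (hVt (u+1)))
    | succ k ih =>
      intro u hu
      have ihh := ih (u+1) (by omega)
      have hker := hrk u (by omega)
      let f0 : ModuleCat.of R ↥(LinearMap.range (G.d (u+2) (u+1)).hom) ⟶ G.X (u+1) :=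
        ModuleCat.ofHom (Submodule.subtype (LinearMap.range (G.d (u+2) (u+1)).hom))
      let g0 : G.X (u+1) ⟶ ModuleCat.of R ↥(LinearMap.range (G.d (u+1) u).hom) :=
        ModuleCat.ofHom (G.d (u+1) u).hom.rangeRestrict
      let S0 : ShortComplex (ModuleCat.{u} R) := ShortComplex.mk f0 g0
        (by
          refine ModuleCat.hom_ext (LinearMap.ext fun x => ?_)
          change (G.d (u+1) u).hom.rangeRestrict x.val = 0
          refine Subtype.ext ?_
          change (G.d (u+1) u) x.val = 0
          have : x.val ∈ LinearMap.ker (G.d (u+1) u).hom := hker ▸ x.2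
          exact this)
      have hS0 : S0.ShortExact := by
        refine ShortComplex.ShortExact.mk' ?_ ?_ ?_
        · rw [ShortComplex.moduleCat_exact_iff]
          intro x hx
          have hx0 : (G.d (u+1) u) x = 0 := congrArg Subtype.val hx
          have : x ∈ LinearMap.range (G.d (u+2) (u+1)).hom := by
            rw [hker]; exact hx0
          exact ⟨⟨x, this⟩, rfl⟩
        · rw [ModuleCat.mono_iff_injective]
          exact Submodule.injective_subtype _
        · rw [ModuleCat.epi_iff_surjective]
          exact LinearMap.surjective_rangeRestrict _
      have hV3 := DepthAux.V_ses₃ X P hS0 ihh (hVt (u+1))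
      refine DepthAux.V_mono X ?_ hV3
      refine le_min tsub_le_self (le_of_eq ?_)
      rw [tsub_tsub, Nat.cast_add, Nat.cast_one]
  -- the map G.X 0 → H₀(F) ⊗ B
  haveI hiso : IsIso (F.homologyι 0) := by
    refine ShortComplex.isIso_homologyι (F.sc 0) (F.shape _ _ ?_)
    rw [ChainComplex.next_nat_zero]
    intro h
    exact absurd h (by simp [ComplexShape.down_Rel])
  let π0 : F.X 0 ⟶ F.homology 0 := F.pOpcycles 0 ≫ inv (F.homologyι 0)
  have hπ0surj : Function.Surjective π0 := by
    rw [← ModuleCat.epi_iff_surjective]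
    infer_instance
  -- kernel of π0
  have hcolim := F.opcyclesIsCokernel 1 0 (by rw [ChainComplex.prev]; omega)
  let e1 : F.opcycles 0 ≅ cokernel (F.d 1 0) :=
    hcolim.coconePointUniqueUpToIso (colimit.isColimit _)
  have he1 : F.pOpcycles 0 ≫ e1.hom = cokernel.π (F.d 1 0) := by
    have := hcolim.comp_coconePointUniqueUpToIso_hom (colimit.isColimit _)
      WalkingParallelPair.one
    simpa using this
  let e2 := ModuleCat.cokernelIsoRangeQuotient (F.d 1 0)
  have he2 : cokernel.π (F.d 1 0) ≫ e2.hom = ModuleCat.ofHom (LinearMap.range (F.d 1 0).hom).mkQ :=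
    ModuleCat.cokernel_π_cokernelIsoRangeQuotient_hom _
  have hmk : ∀ x : ↥(F.X 0),
      e2.hom (e1.hom (F.pOpcycles 0 x)) = (LinearMap.range (F.d 1 0).hom).mkQ x := by
    intro x
    change ((F.pOpcycles 0 ≫ e1.hom) ≫ e2.hom) x = _
    rw [he1, he2]
    rfl
  have hkerπ0 : LinearMap.ker π0.hom = LinearMap.range (F.d 1 0).hom := by
    ext x
    have h1 : π0 x = 0 ↔ F.pOpcycles 0 x = 0 := by
      constructor
      · intro h
        have := DepthAux.iso_injective (inv (F.homologyι 0))
          (a₁ := F.pOpcycles 0 x) (a₂ := 0) (by simpa [π0] using h)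
        exact this
      · intro h
        change inv (F.homologyι 0) (F.pOpcycles 0 x) = 0
        rw [h, map_zero]
    have h2 : F.pOpcycles 0 x = 0 ↔ e2.hom (e1.hom (F.pOpcycles 0 x)) = 0 := by
      constructor
      · intro h; rw [h, map_zero, map_zero]
      · intro h
        exact DepthAux.iso_injective e1.hom (DepthAux.iso_injective e2.hom
          (by simpa using h))
    rw [LinearMap.mem_ker, h1, h2, hmk]
    rw [Submodule.mkQ_apply, Submodule.Quotient.mk_eq_zero]
  have hexact_fpi : Function.Exact (F.d 1 0).hom π0.hom := LinearMap.exact_iff.2 hkerπ0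
  have hq_exact : Function.Exact (LinearMap.rTensor B (F.d 1 0).hom) (LinearMap.rTensor B π0.hom) :=
    rTensor_exact B hexact_fpi hπ0surj
  have hq_surj : Function.Surjective (LinearMap.rTensor B π0.hom) :=
    LinearMap.rTensor_surjective B hπ0surj
  -- the final short exact sequence
  have hrange_eq : LinearMap.range (G.d 1 0).hom = LinearMap.range (LinearMap.rTensor B (F.d 1 0).hom) :=
    rfl
  let T : ModuleCat.{u} R := ModuleCat.of R (TensorProduct R ↥(F.homology 0) B)
  let fF : ModuleCat.of R ↥(LinearMap.range (G.d 1 0).hom) ⟶ G.X 0 :=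
    ModuleCat.ofHom (Submodule.subtype (LinearMap.range (G.d 1 0).hom))
  let gF : G.X 0 ⟶ T := ModuleCat.ofHom (LinearMap.rTensor B π0.hom)
  let SF : ShortComplex (ModuleCat.{u} R) := ShortComplex.mk fF gF
    (by
      refine ModuleCat.hom_ext (LinearMap.ext fun x => ?_)
      change LinearMap.rTensor B π0.hom x.val = 0
      refine (hq_exact x.val).2 ?_
      obtain ⟨w, hw⟩ := x.2
      exact ⟨w, hw⟩)
  have hSF : SF.ShortExact := by
    refine ShortComplex.ShortExact.mk' ?_ ?_ ?_
    · rw [ShortComplex.moduleCat_exact_iff]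
      intro x hx
      obtain ⟨w, hw⟩ := (hq_exact x).1 hx
      exact ⟨⟨x, LinearMap.mem_range.2 ⟨w, hw⟩⟩, rfl⟩
    · rw [ModuleCat.mono_iff_injective]
      exact Submodule.injective_subtype _
    · rw [ModuleCat.epi_iff_surjective]
      exact hq_surj
  -- conclude
  rw [DepthAux.le_extDepth_iff]
  cases s with
  | zero =>
    have h1 : DepthAux.V X ⊤ SF.X₁ := by
      refine DepthAux.V_of_subsingleton X P ?_
      haveI := hGXsub 1 (by omega)
      refine ⟨fun x y => Subtype.ext ?_⟩
      obtain ⟨w, hw⟩ := x.2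
      obtain ⟨w', hw'⟩ := y.2
      rw [← hw, ← hw', Subsingleton.elim w w']
    have hV3 := DepthAux.V_ses₃ X P hSF h1 (hVt 0)
    refine DepthAux.V_mono X ?_ hV3
    simp
  | succ m =>
    have h1 := claim m 0 (by omega)
    have hV3 := DepthAux.V_ses₃ X P hSF h1 (hVt 0)
    refine DepthAux.V_mono X ?_ hV3
    refine le_min tsub_le_self (le_of_eq ?_)
    rw [tsub_tsub, Nat.cast_add, Nat.cast_one]
end
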